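/- arXiv:1004.4812 — 2 statements merged into one kernel-verified Lean document; each statement's English description precedes it below -/
import Mathlib

section
/- Let x_0 < 0.649. There exists a constant δ > 0 such that for every function of the form g(x) = 1 + Σ_{k=1}^∞ a_k x^k with coefficients a_k ∈ {−1, 0, 1}, and every x ∈ [0, x_0], if |g(x)| < δ then g'(x) < −δ. -/
open Set MeasureTheory Filter Topology

noncomputable section

/-- The β-transformation `x ↦ βx mod 1`. -/
def fbeta (β : ℝ) (x : ℝ) : ℝ := Int.fract (β * x)

/-- The digit sequence `d(x, β)`, given by `d(x,β)_n = [β f_β^n(x)]`. -/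
def bdigit (β x : ℝ) (n : ℕ) : ℕ := (⌊β * (fbeta β)^[n] x⌋).toNat

/-- The β-shift `S_β`: the closure (product topology) of the set of digit sequences of
points of `[0,1)`. -/
def betaShift (β : ℝ) : Set (ℕ → ℕ) :=
  closure {d | ∃ x ∈ Set.Ico (0 : ℝ) 1, d = bdigit β x}

/-- `π_β ((i_k)) = ∑ i_k β^{-(k+1)}`. -/
def piBeta (β : ℝ) (d : ℕ → ℕ) : ℝ := ∑' k : ℕ, (d k : ℝ) / β ^ (k + 1)

/-- The finite word `w` occurs in the sequence `d` at position `m`. -/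
def occursAt (w : List ℕ) (d : ℕ → ℕ) (m : ℕ) : Prop :=
  ∀ i < w.length, d (m + i) = w.getD i 0

/-- The finite word `w` occurs somewhere in the sequence `d`. -/
def occursIn (w : List ℕ) (d : ℕ → ℕ) : Prop := ∃ m, occursAt w d m

/-- `w ∈ S_β^*`: the finite word `w` occurs in some sequence of `S_β`. -/
def wordIn (β : ℝ) (w : List ℕ) : Prop := ∃ d ∈ betaShift β, occursIn w d

/-- The finite word `w` occurs in some sequence of the set `S`. -/
def wordInSet (S : Set (ℕ → ℕ)) (w : List ℕ) : Prop := ∃ d ∈ S, occursIn w d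

/-- The cylinder `[w]` in `S_β`. -/
def cylinder (β : ℝ) (w : List ℕ) : Set (ℕ → ℕ) :=
  {d ∈ betaShift β | ∀ i < w.length, d i = w.getD i 0}

/-- A subshift of finite type inside `S_β`: the subset of `S_β` determined by a finite
set of forbidden words. -/
def IsSFTin (β : ℝ) (S : Set (ℕ → ℕ)) : Prop :=
  ∃ F : Finset (List ℕ), S = {d ∈ betaShift β | ∀ w ∈ F, ¬ occursIn w d}

/-- `S_β` is a subshift of finite type iff `d(1,β)` has only finitely many nonzero digits. -/
def betaShiftFiniteType (β : ℝ) : Prop := ∃ N, ∀ n ≥ N, bdigit β 1 n = 0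

/-- The length (Lebesgue measure) of a set of reals. -/
def len (I : Set ℝ) : ℝ := (volume I).toReal

/-- `I` is a (possibly degenerate) closed interval. -/
def IsClosedInterval (I : Set ℝ) : Prop := ∃ a b : ℝ, a ≤ b ∧ I = Set.Icc a b

/-- A legal move in Schmidt's game with ratio `ρ`: a closed subinterval `cur` of `prev`
with `|cur| ≥ ρ|prev|`. -/
def MoveLegal (ρ : ℝ) (prev cur : Set ℝ) : Prop :=
  IsClosedInterval cur ∧ cur ⊆ prev ∧ ρ * len prev ≤ len cur

/-- White has a winning strategy in Schmidt's `(α,γ)`-game on `[0,1]` with target set `E`: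
there is a strategy (a function from the history of Black's moves to White's next move)
such that, for every sequence of moves of Black starting with a closed interval
`B 0 ⊆ [0,1]`, White's moves are legal as long as Black's have been, and if Black always
moves legally then `⋂ k, W k ⊆ E`. -/
def WinsSchmidt (α γ : ℝ) (E : Set ℝ) : Prop :=
  ∃ strat : List (Set ℝ) → Set ℝ,
    ∀ B : ℕ → Set ℝ,
      (IsClosedInterval (B 0) ∧ B 0 ⊆ Set.Icc (0 : ℝ) 1) →
      (∀ n : ℕ,
        (∀ k < n, MoveLegal γ (strat (List.ofFn fun i : Fin (k + 1) => B i)) (B (k + 1))) →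
        MoveLegal α (B n) (strat (List.ofFn fun i : Fin (n + 1) => B i))) ∧
      ((∀ k : ℕ, MoveLegal γ (strat (List.ofFn fun i : Fin (k + 1) => B i)) (B (k + 1))) →
        (⋂ k : ℕ, strat (List.ofFn fun i : Fin (k + 1) => B i)) ⊆ E)

/-- `E` is `α`-winning: it is `(α,γ)`-winning for every `γ ∈ (0,1)`. -/
def AlphaWinning (α : ℝ) (E : Set ℝ) : Prop :=
  ∀ γ ∈ Set.Ioo (0 : ℝ) 1, WinsSchmidt α γ E

/-- A similarity transformation of `ℝ`. -/
def IsSimilarityMap (f : ℝ → ℝ) : Prop := ∃ a b : ℝ, a ≠ 0 ∧ ∀ x, f x = a * x + b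

/-- Falconer's class `𝒢^s`: `G_δ` sets `F` with `dim_H (⋂ i, f_i(F)) ≥ s` for every
sequence of similarity transformations `(f_i)`. -/
def FalconerClass (s : ℝ) (F : Set ℝ) : Prop :=
  IsGδ F ∧ ∀ f : ℕ → ℝ → ℝ, (∀ i, IsSimilarityMap (f i)) →
    ENNReal.ofReal s ≤ dimH (⋂ i, f i '' F)

/-- The suffix of `u` of length `m+1` coincides with the first `m+1` digits of `d(1,β)`. -/
def tailMatch (β : ℝ) (u : List ℕ) (m : ℕ) : Prop :=
  m < u.length ∧ ∀ t ≤ m, u.getD (u.length - 1 - m + t) 0 = bdigit β 1 t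

/-!
Write `g(x) = 1 + S(x)` with `S(x) = ∑ a_k x^(k+1)`. For `x ≤ 0.49` we have
`|S(x)| ≤ x / (1 - x) < 1`, so `g(x)` stays away from `0`. For `0.49 ≤ x ≤ 0.649` put
`μ = 154/25`; then `g'(x) - μ S(x) = ∑ a_k (k + 1 - μx) x^k ≤ ∑ |k + 1 - μx| x^k`, and since
`3 ≤ μx ≤ 4` the right-hand side has a closed form, bounded by `6.159 < μ`. When `g(x) ≈ 0`,
i.e. `S(x) ≈ -1`, this forces `g'(x) ≤ 6.159 - μ + O(δ) < -δ`.
-/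

theorem hasSum_succ_mul_geometric {𝕜 : Type*} [NormedDivisionRing 𝕜] [HasSummableGeomSeries 𝕜]
    {r : 𝕜} (hr : ‖r‖ < 1) : HasSum (fun n : ℕ => ((n : 𝕜) + 1) * r ^ n) (1 / (1 - r) ^ 2) := by
  simpa using hasSum_choose_mul_geometric_of_norm_lt_one 1 hr

theorem hasSum_abs_succ_sub_mul_geometric {x c : ℝ} (hx : |x| < 1) (hc₃ : 3 ≤ c) (hc₄ : c ≤ 4) :
    HasSum (fun k : ℕ => |(k : ℝ) + 1 - c| * x ^ k)
      (1 / (1 - x) ^ 2 - c / (1 - x) + 2 * ((c - 1) + (c - 2) * x + (c - 3) * x ^ 2)) := by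
  have hsucc : HasSum (fun k : ℕ => ((k : ℝ) + 1) * x ^ k) (1 / (1 - x) ^ 2) :=
    hasSum_succ_mul_geometric (by rwa [Real.norm_eq_abs])
  have hgeom : HasSum (fun k : ℕ => c * x ^ k) (c / (1 - x)) := by
    simpa [div_eq_mul_inv] using (hasSum_geometric_of_abs_lt_one hx).mul_left c
  have hcorr : HasSum (fun k : ℕ => 2 * max (c - ((k : ℝ) + 1)) 0 * x ^ k)
      (∑ k ∈ Finset.range 3, 2 * max (c - ((k : ℝ) + 1)) 0 * x ^ k) := by
    refine hasSum_sum_of_ne_finset_zero fun k hk => ?_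
    have : (3 : ℝ) ≤ k := by exact_mod_cast not_lt.1 (Finset.mem_range.not.1 hk)
    rw [max_eq_right (by linarith), mul_zero, zero_mul]
  have hcorr_eq : ∑ k ∈ Finset.range 3, 2 * max (c - ((k : ℝ) + 1)) 0 * x ^ k =
      2 * ((c - 1) + (c - 2) * x + (c - 3) * x ^ 2) := by
    simp only [Finset.sum_range_succ, Finset.sum_range_zero, Nat.cast_zero, Nat.cast_one,
      Nat.cast_ofNat]
    rw [max_eq_left (by linarith), max_eq_left (by linarith), max_eq_left (by linarith)]
    ring
  rw [← hcorr_eq]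
  refine ((hsucc.sub hgeom).add hcorr).congr_fun fun k => ?_
  have : |(k : ℝ) + 1 - c| = ((k : ℝ) + 1 - c) + 2 * max (c - ((k : ℝ) + 1)) 0 := by grind
  rw [this]
  ring

/-- `μ = 154/25` keeps `μx ∈ [3, 4]` on the whole range; the bound is nearly sharp at
`x = 0.649`, where the closed form is `μ - 0.0036`. -/
theorem hasSum_abs_succ_sub_mul_geometric_le {x : ℝ} (h₁ : 49 / 100 ≤ x) (h₂ : x ≤ 649 / 1000) :
    ∃ s ≤ 6159 / 1000, HasSum (fun k : ℕ => |(k : ℝ) + 1 - 154 / 25 * x| * x ^ k) s := by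
  refine ⟨_, ?_, hasSum_abs_succ_sub_mul_geometric (by rw [abs_lt]; constructor <;> linarith)
    (by linarith) (by linarith)⟩
  have hP : 1 - 154 / 25 * x * (1 - x) + (2 * ((154 / 25 * x - 1) + (154 / 25 * x - 2) * x
      + (154 / 25 * x - 3) * x ^ 2) - 6159 / 1000) * (1 - x) ^ 2 ≤ 0 := by
    nlinarith [mul_nonneg (sub_nonneg.2 h₁) (sub_nonneg.2 h₂),
      mul_nonneg (mul_nonneg (sub_nonneg.2 h₁) (sub_nonneg.2 h₂)) (by linarith : (0 : ℝ) ≤ x)]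
  have hu : 1 - x ≠ 0 := by linarith
  rw [← sub_nonpos]
  calc _ = (1 - 154 / 25 * x * (1 - x) + (2 * ((154 / 25 * x - 1) + (154 / 25 * x - 2) * x
        + (154 / 25 * x - 3) * x ^ 2) - 6159 / 1000) * (1 - x) ^ 2) / (1 - x) ^ 2 := by
          field_simp
          ring
    _ ≤ 0 := div_nonpos_of_nonpos_of_nonneg hP (sq_nonneg _)

theorem abs_mul_le_of_abs_le_one {a w b : ℝ} (ha : |a| ≤ 1) (hw : |w| ≤ b) : |a * w| ≤ b := by
  rw [abs_mul]
  exact (mul_le_of_le_one_left (abs_nonneg w) ha).trans hw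

section UnitCoefficients

variable {a : ℕ → ℝ}

theorem summable_mul_of_abs_le (ha : ∀ k, |a k| ≤ 1) {w b : ℕ → ℝ} (hb : Summable b)
    (hwb : ∀ k, |w k| ≤ b k) : Summable fun k => a k * w k :=
  .of_norm_bounded hb fun k => abs_mul_le_of_abs_le_one (ha k) (hwb k)

theorem tsum_mul_le_of_abs_le (ha : ∀ k, |a k| ≤ 1) {w b : ℕ → ℝ} {s : ℝ} (hb : HasSum b s)
    (hwb : ∀ k, |w k| ≤ b k) : ∑' k, a k * w k ≤ s :=
  hasSum_le (fun k => (le_abs_self _).trans (abs_mul_le_of_abs_le_one (ha k) (hwb k)))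
    (summable_mul_of_abs_le ha hb.summable hwb).hasSum hb

theorem hasDerivAt_tsum_mul_pow_succ (ha : ∀ k, |a k| ≤ 1) {x : ℝ} (hx : |x| < 1) :
    HasDerivAt (fun t : ℝ => ∑' k, a k * t ^ (k + 1)) (∑' k, a k * (((k : ℝ) + 1) * x ^ k)) x := by
  obtain ⟨r, hxr, hr₁⟩ := exists_between hx
  have hr₀ : 0 < r := (abs_nonneg x).trans_lt hxr
  refine hasDerivAt_tsum_of_isPreconnected (g := fun k t => a k * t ^ (k + 1))
    (g' := fun k t => a k * (((k : ℝ) + 1) * t ^ k)) (t := Ioo (-r) r) (y₀ := 0)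
    (hasSum_succ_mul_geometric (by rwa [Real.norm_of_nonneg hr₀.le])).summable
    isOpen_Ioo isPreconnected_Ioo (fun k y _ => ?_) (fun k y hy => ?_) ⟨by linarith, hr₀⟩
    (by simp) (abs_lt.1 hxr)
  · simpa [mul_comm] using (hasDerivAt_pow (k + 1) y).const_mul (a k)
  · refine abs_mul_le_of_abs_le_one (ha k) ?_
    rw [abs_mul, abs_pow, abs_of_nonneg (by positivity : (0 : ℝ) ≤ k + 1)]
    gcongr
    exact abs_le.2 ⟨hy.1.le, hy.2.le⟩

theorem neg_div_one_sub_le_tsum_mul_pow_succ (ha : ∀ k, |a k| ≤ 1) {x : ℝ} (hx₀ : 0 ≤ x)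
    (hx₁ : x < 1) : -(x / (1 - x)) ≤ ∑' k, a k * x ^ (k + 1) := by
  have hgeom : HasSum (fun k : ℕ => x ^ (k + 1)) (x / (1 - x)) := by
    simpa [pow_succ', div_eq_mul_inv] using (hasSum_geometric_of_lt_one hx₀ hx₁).mul_left x
  have := tsum_mul_le_of_abs_le (a := fun k => -a k) (by simpa using ha) hgeom
    fun k => (abs_of_nonneg (pow_nonneg hx₀ _)).le
  simp only [neg_mul, tsum_neg] at this
  linarith

theorem tsum_succ_mul_pow_sub_le (ha : ∀ k, |a k| ≤ 1) {x μ s : ℝ} (hx₀ : 0 ≤ x) (hx₁ : x < 1)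
    (hs : HasSum (fun k : ℕ => |(k : ℝ) + 1 - μ * x| * x ^ k) s) :
    ∑' k, a k * (((k : ℝ) + 1) * x ^ k) - μ * ∑' k, a k * x ^ (k + 1) ≤ s := by
  have hD : Summable fun k => a k * (((k : ℝ) + 1) * x ^ k) :=
    summable_mul_of_abs_le ha (hasSum_succ_mul_geometric (by rwa [Real.norm_of_nonneg hx₀])).summable
      fun k => (abs_of_nonneg (by positivity)).le
  have hS : Summable fun k => a k * x ^ (k + 1) :=
    summable_mul_of_abs_le ha ((summable_geometric_of_lt_one hx₀ hx₁).mul_left x)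
      fun k => by rw [abs_of_nonneg (by positivity), pow_succ']
  calc ∑' k, a k * (((k : ℝ) + 1) * x ^ k) - μ * ∑' k, a k * x ^ (k + 1)
      = ∑' k, a k * (((k : ℝ) + 1 - μ * x) * x ^ k) := by
        rw [← tsum_mul_left, ← hD.tsum_sub (hS.mul_left μ)]
        exact tsum_congr fun k => by ring
    _ ≤ s := tsum_mul_le_of_abs_le ha hs fun k => by rw [abs_mul, abs_of_nonneg (pow_nonneg hx₀ k)]

end UnitCoefficients

/-- Solomyak's transversality lemma: for `x₀ < 0.649` there is `δ > 0`
such that for every `g(x) = 1 + ∑ a_k x^k` with coefficients in `{-1,0,1}` and every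
`x ∈ [0, x₀]`, if `|g(x)| < δ` then `g'(x) < -δ`. -/
theorem solomyak_transversality (x₀ : ℝ) (hx₀ : x₀ < 0.649) :
    ∃ δ > 0, ∀ a : ℕ → ℝ, (∀ k, a k = -1 ∨ a k = 0 ∨ a k = 1) →
      ∀ x ∈ Set.Icc (0 : ℝ) x₀,
        |1 + ∑' k : ℕ, a k * x ^ (k + 1)| < δ →
          deriv (fun t : ℝ => 1 + ∑' k : ℕ, a k * t ^ (k + 1)) x < -δ := by
  refine ⟨1 / 10000, by norm_num, fun a ha x ⟨hx_nonneg, hxx₀⟩ hg => ?_⟩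
  have ha₁ : ∀ k, |a k| ≤ 1 := fun k => by rcases ha k with h | h | h <;> norm_num [h]
  have hx : x < 649 / 1000 := by norm_num at hx₀; linarith
  have hx₁ : x < 1 := by linarith
  rw [((hasDerivAt_tsum_mul_pow_succ ha₁ (by rwa [abs_of_nonneg hx_nonneg])).const_add 1).deriv]
  obtain ⟨hg_lo, hg_hi⟩ := abs_lt.1 hg
  rcases le_or_gt x (49 / 100) with hsmall | hlarge
  · have hS := neg_div_one_sub_le_tsum_mul_pow_succ ha₁ hx_nonneg hx₁
    have : x / (1 - x) ≤ 49 / 51 := by rw [div_le_iff₀ (by linarith)]; linarith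
    linarith
  · obtain ⟨s, hs_le, hs⟩ := hasSum_abs_succ_sub_mul_geometric_le hlarge.le hx.le
    have := tsum_succ_mul_pow_sub_le (μ := 154 / 25) ha₁ hx_nonneg hx₁ hs
    linarith
end
end

section
/- For β_1, β_2 > 1, the inclusion S_{β_1} ⊆ S_{β_2} holds if and only if β_1 ≤ β_2. -/
open Set MeasureTheory Filter Topology

noncomputable section

/-!
Reading the first `n` digits of `d(x, β)` in base `β` gives
`∑_{k<n} d_k β^{-(k+1)} = x - f_β^n(x) β^{-n}`, a number in `(x - β^{-n}, x]`. Conversely, a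
word all of whose suffixes have `β`-value `< 1` is the prefix of `d(y, β)` for `y` its own
`β`-value. As `S_β` is a closure in the product topology, these two facts describe its finite
prefixes. Raising `β` lowers the value of every word, so `S_{β₁} ⊆ S_{β₂}` when `β₁ ≤ β₂`. If
`β₂ < β₁`, the `β₂`-value of a word is at least `β₁ / β₂` times its `β₁`-value; for `x` close to
`1` a long prefix of `d(x, β₁)` therefore has `β₂`-value above `1`, so `d(x, β₁) ∉ S_{β₂}`.
-/

theorem mem_closure_iff_forall_exists_mem_cylinder {α : Type*} [TopologicalSpace α]
    [DiscreteTopology α] {s : Set (ℕ → α)} {x : ℕ → α} :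
    x ∈ closure s ↔ ∀ n, ∃ y ∈ s, y ∈ PiNat.cylinder x n := by
  rw [(PiNat.isTopologicalBasis_cylinders fun _ => α).mem_closure_iff]
  constructor
  · intro h n
    obtain ⟨y, hy, hys⟩ := h _ ⟨x, n, rfl⟩ (PiNat.self_mem_cylinder x n)
    exact ⟨y, hys, hy⟩
  · rintro h _ ⟨z, n, rfl⟩ hx
    obtain ⟨y, hys, hy⟩ := h n
    exact ⟨y, PiNat.mem_cylinder_iff_eq.1 hx ▸ hy, hys⟩

theorem mem_betaShift_iff {β : ℝ} {d : ℕ → ℕ} :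
    d ∈ betaShift β ↔ ∀ n, ∃ x ∈ Ico (0 : ℝ) 1, bdigit β x ∈ PiNat.cylinder d n := by
  simp only [betaShift, mem_closure_iff_forall_exists_mem_cylinder]
  exact forall_congr' fun n =>
    ⟨fun ⟨_, ⟨x, hx, rfl⟩, h⟩ => ⟨x, hx, h⟩, fun ⟨x, hx, h⟩ => ⟨_, ⟨x, hx, rfl⟩, h⟩⟩

section Digits

variable {β x : ℝ}

theorem fbeta_iterate_nonneg (β : ℝ) (hx : 0 ≤ x) : ∀ n, 0 ≤ (fbeta β)^[n] x
  | 0 => hx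
  | n + 1 => by rw [Function.iterate_succ_apply']; exact Int.fract_nonneg _

theorem fbeta_iterate_lt_one (β : ℝ) (hx : x < 1) : ∀ n, (fbeta β)^[n] x < 1
  | 0 => hx
  | n + 1 => by rw [Function.iterate_succ_apply']; exact Int.fract_lt_one _

theorem bdigit_add (β x : ℝ) (j k : ℕ) :
    bdigit β x (j + k) = bdigit β ((fbeta β)^[j] x) k := by
  rw [bdigit, bdigit, add_comm, Function.iterate_add_apply]

theorem bdigit_succ (β x : ℝ) (n : ℕ) : bdigit β x (n + 1) = bdigit β (fbeta β x) n := by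
  rw [bdigit, bdigit, Function.iterate_succ_apply]

theorem mul_fbeta_iterate (hβ : 0 ≤ β) (hx : 0 ≤ x) (n : ℕ) :
    β * (fbeta β)^[n] x = bdigit β x n + (fbeta β)^[n + 1] x := by
  have hfloor : (0 : ℤ) ≤ ⌊β * (fbeta β)^[n] x⌋ :=
    Int.floor_nonneg.2 (mul_nonneg hβ (fbeta_iterate_nonneg β hx n))
  rw [Function.iterate_succ_apply', fbeta, bdigit, ← Int.cast_natCast, Int.toNat_of_nonneg hfloor,
    Int.floor_add_fract]

theorem bdigit_zero_of_mul_eq {y r : ℝ} {a : ℕ} (hr : r ∈ Ico (0 : ℝ) 1)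
    (h : β * y = a + r) : bdigit β y 0 = a := by
  simp [bdigit, h, Int.floor_eq_zero_iff.2 hr]

theorem fbeta_of_mul_eq {y r : ℝ} {a : ℕ} (hr : r ∈ Ico (0 : ℝ) 1)
    (h : β * y = a + r) : fbeta β y = r := by
  rw [fbeta, h, Int.fract_natCast_add, Int.fract_eq_self.2 hr]

end Digits

def prefixValue (β : ℝ) (d : ℕ → ℕ) (n : ℕ) : ℝ :=
  ∑ k ∈ Finset.range n, (d k : ℝ) / β ^ (k + 1)

section PrefixValue

variable {β β₁ β₂ x : ℝ} {d : ℕ → ℕ}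

theorem prefixValue_nonneg (hβ : 0 ≤ β) (d : ℕ → ℕ) (n : ℕ) : 0 ≤ prefixValue β d n :=
  Finset.sum_nonneg fun _ _ => by positivity

theorem prefixValue_congr {d' : ℕ → ℕ} {n : ℕ} (h : d' ∈ PiNat.cylinder d n) :
    prefixValue β d' n = prefixValue β d n :=
  Finset.sum_congr rfl fun k hk => by rw [PiNat.mem_cylinder_iff.1 h k (Finset.mem_range.1 hk)]

theorem mul_prefixValue_succ (hβ : β ≠ 0) (d : ℕ → ℕ) (n : ℕ) :
    β * prefixValue β d (n + 1) = d 0 + prefixValue β (fun k => d (k + 1)) n := by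
  rw [prefixValue, prefixValue, Finset.sum_range_succ', mul_add, Finset.mul_sum, add_comm]
  congr 1
  · field_simp
    ring
  · refine Finset.sum_congr rfl fun k _ => ?_
    rw [pow_succ]
    field_simp

theorem prefixValue_le_of_le (hβ₁ : 0 < β₁) (h : β₁ ≤ β₂) (d : ℕ → ℕ) (n : ℕ) :
    prefixValue β₂ d n ≤ prefixValue β₁ d n :=
  Finset.sum_le_sum fun _ _ => by gcongr

theorem div_mul_prefixValue_le (hβ₂ : 0 < β₂) (h : β₂ ≤ β₁) (d : ℕ → ℕ) (n : ℕ) :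
    β₁ / β₂ * prefixValue β₁ d n ≤ prefixValue β₂ d n := by
  have hβ₁ : 0 < β₁ := hβ₂.trans_le h
  rw [prefixValue, prefixValue, Finset.mul_sum]
  refine Finset.sum_le_sum fun k _ => ?_
  have hpow : β₁ / β₂ ≤ (β₁ / β₂) ^ (k + 1) :=
    le_self_pow₀ ((one_le_div hβ₂).2 h) (Nat.succ_ne_zero k)
  calc β₁ / β₂ * (d k / β₁ ^ (k + 1)) ≤ (β₁ / β₂) ^ (k + 1) * (d k / β₁ ^ (k + 1)) := by
        gcongr
    _ = d k / β₂ ^ (k + 1) := by rw [div_pow]; field_simp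

theorem prefixValue_bdigit (hβ : 0 < β) (hx : 0 ≤ x) (n : ℕ) :
    prefixValue β (bdigit β x) n = x - (fbeta β)^[n] x / β ^ n := by
  induction n with
  | zero => simp [prefixValue]
  | succ n ih =>
    rw [prefixValue, Finset.sum_range_succ, ← prefixValue, ih,
      eq_sub_of_add_eq' (mul_fbeta_iterate hβ.le hx n).symm]
    field_simp
    ring

theorem prefixValue_bdigit_lt_one (hβ : 0 < β) (hx : x ∈ Ico (0 : ℝ) 1) (n : ℕ) :
    prefixValue β (bdigit β x) n < 1 := by
  rw [prefixValue_bdigit hβ hx.1]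
  have : 0 ≤ (fbeta β)^[n] x / β ^ n := by positivity [fbeta_iterate_nonneg β hx.1 n]
  linarith [hx.2]

theorem tendsto_prefixValue_bdigit (hβ : 1 < β) (hx : x ∈ Ico (0 : ℝ) 1) :
    Tendsto (prefixValue β (bdigit β x)) atTop (𝓝 x) := by
  have hβ₀ : 0 < β := one_pos.trans hβ
  have hpow : Tendsto (fun n : ℕ => (β ^ n)⁻¹) atTop (𝓝 0) :=
    tendsto_inv_atTop_zero.comp (tendsto_pow_atTop_atTop_of_one_lt hβ)
  have herr : Tendsto (fun n => (fbeta β)^[n] x / β ^ n) atTop (𝓝 0) := by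
    refine squeeze_zero (fun n => by positivity [fbeta_iterate_nonneg β hx.1 n]) (fun n => ?_) hpow
    rw [div_eq_mul_inv]
    exact mul_le_of_le_one_left (by positivity) (fbeta_iterate_lt_one β hx.2 n).le
  simpa [funext (prefixValue_bdigit hβ₀ hx.1)] using tendsto_const_nhds.sub herr

end PrefixValue

section BetaShift

variable {β β₁ β₂ x : ℝ} {d : ℕ → ℕ}

theorem bdigit_prefixValue_mem_cylinder (hβ : 0 < β) {w : ℕ → ℕ} {n : ℕ}
    (hw : ∀ j, prefixValue β (fun k => w (j + k)) (n - j) < 1) :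
    bdigit β (prefixValue β w n) ∈ PiNat.cylinder w n := by
  induction n generalizing w with
  | zero => simp [PiNat.cylinder_zero]
  | succ n ih =>
    have hw' : ∀ j, prefixValue β (fun k => w (j + k + 1)) (n - j) < 1 := fun j => by
      simpa only [Nat.add_sub_add_right, add_right_comm j 1] using hw (j + 1)
    have hr : prefixValue β (fun k => w (k + 1)) n ∈ Ico (0 : ℝ) 1 :=
      ⟨prefixValue_nonneg hβ.le _ n, by simpa using hw' 0⟩
    have hmul := mul_prefixValue_succ hβ.ne' w n
    refine PiNat.mem_cylinder_iff.2 fun i hi => ?_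
    cases i with
    | zero => exact bdigit_zero_of_mul_eq hr hmul
    | succ i =>
      rw [bdigit_succ, fbeta_of_mul_eq hr hmul]
      exact PiNat.mem_cylinder_iff.1 (ih hw') i (by omega)

theorem bdigit_mem_betaShift_of_le (hβ₁ : 0 < β₁) (h : β₁ ≤ β₂) (hx : x ∈ Ico (0 : ℝ) 1) :
    bdigit β₁ x ∈ betaShift β₂ := by
  have hsuffix : ∀ n j, prefixValue β₂ (fun k => bdigit β₁ x (j + k)) n < 1 := fun n j => by
    simp_rw [bdigit_add]
    exact (prefixValue_le_of_le hβ₁ h _ _).trans_lt <| prefixValue_bdigit_lt_one hβ₁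
      ⟨fbeta_iterate_nonneg β₁ hx.1 j, fbeta_iterate_lt_one β₁ hx.2 j⟩ n
  refine mem_betaShift_iff.2 fun n => ⟨prefixValue β₂ (bdigit β₁ x) n,
    ⟨prefixValue_nonneg (hβ₁.le.trans h) _ n, by simpa using hsuffix n 0⟩,
    bdigit_prefixValue_mem_cylinder (hβ₁.trans_le h) fun j => hsuffix (n - j) j⟩

theorem betaShift_mono (hβ₁ : 0 < β₁) (h : β₁ ≤ β₂) : betaShift β₁ ⊆ betaShift β₂ :=
  closure_minimal (by rintro _ ⟨x, hx, rfl⟩; exact bdigit_mem_betaShift_of_le hβ₁ h hx)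
    isClosed_closure

theorem prefixValue_lt_one_of_mem_betaShift (hβ : 0 < β) (hd : d ∈ betaShift β) (n : ℕ) :
    prefixValue β d n < 1 := by
  obtain ⟨y, hy, hyd⟩ := mem_betaShift_iff.1 hd n
  exact prefixValue_congr hyd ▸ prefixValue_bdigit_lt_one hβ hy n

theorem not_betaShift_subset_of_lt (hβ₂ : 0 < β₂) (hβ₁ : 1 < β₁) (h : β₂ < β₁) :
    ¬ betaShift β₁ ⊆ betaShift β₂ := by
  intro hsub
  have hratio : β₂ / β₁ < 1 := (div_lt_one (hβ₂.trans h)).2 h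
  set x := (β₂ / β₁ + 1) / 2 with hx_def
  have hx : x ∈ Ico (0 : ℝ) 1 := ⟨by positivity, by linarith⟩
  obtain ⟨n, hn⟩ := ((tendsto_prefixValue_bdigit hβ₁ hx).eventually
    (lt_mem_nhds (by linarith : β₂ / β₁ < x))).exists
  have hmem : bdigit β₁ x ∈ betaShift β₂ := hsub (subset_closure ⟨x, hx, rfl⟩)
  have hlarge : 1 < prefixValue β₂ (bdigit β₁ x) n := calc
    1 = β₁ / β₂ * (β₂ / β₁) := by field_simp
    _ < β₁ / β₂ * prefixValue β₁ (bdigit β₁ x) n := by gcongr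
    _ ≤ _ := div_mul_prefixValue_le hβ₂ h.le _ _
  exact hlarge.not_gt (prefixValue_lt_one_of_mem_betaShift hβ₂ hmem n)

end BetaShift

/-- `S_{β₁} ⊆ S_{β₂}` if and only if `β₁ ≤ β₂`. -/
theorem betaShift_subset_iff (β₁ β₂ : ℝ) (h₁ : 1 < β₁) (h₂ : 1 < β₂) :
    betaShift β₁ ⊆ betaShift β₂ ↔ β₁ ≤ β₂ :=
  ⟨fun hsub => not_lt.1 fun h => not_betaShift_subset_of_lt (one_pos.trans h₂) h₁ h hsub,
    betaShift_mono (one_pos.trans h₁)⟩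
end
end
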